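/- arXiv:2303.09820 — 2 statements merged into one kernel-verified Lean document; each statement's English description precedes it below -/
import Mathlib

section
/- The HL-code of length 2^m (m = 2l even), generated by v_0, all v_i, all products of fewer than l of the v_i, and the products indexed by a maximal complement-free set Y of l-subsets of {1,...,m}, has dimension exactly 2^{m-1}. -/
/-!
Evaluating the monomial `∏_{i ∈ T} v i` at the point whose support is `S` gives `1` if `T ⊆ S`
and `0` otherwise. This evaluation pattern is unitriangular for inclusion, so the `2^m`
monomials are linearly independent and the code has dimension equal to its number of
generators. For `m = 2l`, complementation exchanges the subsets of size `< l` with those of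
size `> l`, hence `2^(2l) = 2·#{S : |S| < l} + C(2l, l) = 2·(#{S : |S| < l} + |Y|)`.
-/

/-- `(v i)_j` = bit `i` of `j`. -/
def vVec (m : ℕ) (i : Fin m) (j : Fin (2 ^ m)) : ZMod 2 :=
  if Nat.testBit (j : ℕ) (i : ℕ) then 1 else 0

/-- Monomial evaluation vector `∏_{i ∈ S} v i`. -/
def monomial (m : ℕ) (S : Finset (Fin m)) : Fin (2 ^ m) → ZMod 2 :=
  fun j => ∏ i ∈ S, vVec m i j

open Finset

theorem linearIndependent_of_triangular_eval {ι X K : Type*} [Ring K] [NoZeroDivisors K]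
    [PartialOrder ι] (f : ι → X → K) (p : ι → X) (h_le : ∀ i j, f i (p j) ≠ 0 → i ≤ j)
    (h_diag : ∀ i, f i (p i) ≠ 0) : LinearIndependent K f := by
  classical
  rw [linearIndependent_iff]
  intro c hc
  by_contra hc_ne
  obtain ⟨i, hi_min⟩ := exists_minimal (Finsupp.support_nonempty_iff.2 hc_ne)
  have hi : c i ≠ 0 := Finsupp.mem_support_iff.1 hi_min.prop
  -- At `p i` only the term of `i` survives: any other `j` with `f j (p i) ≠ 0` lies below `i`.
  have h_eval : c i * f i (p i) = 0 := by
    have := congr_fun hc (p i)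
    rw [Finsupp.linearCombination_apply, Finsupp.sum, Finset.sum_apply, sum_eq_single i] at this
    · exact this
    · intro j hj hji
      by_contra h
      exact hji (hi_min.eq_of_le hj (h_le j i (right_ne_zero_of_mul h)))
    · exact fun h => absurd hi_min.prop h
  exact hi ((mul_eq_zero.1 h_eval).resolve_right (h_diag i))

theorem Nat.testBit_sum_two_pow (s : Finset ℕ) (k : ℕ) :
    (∑ i ∈ s, 2 ^ i).testBit k ↔ k ∈ s := by
  rw [← Nat.mem_bitIndices, ← List.mem_toFinset, Finset.toFinset_bitIndices_sum_two_pow]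

def indexOfBitSet (m : ℕ) (S : Finset (Fin m)) : Fin (2 ^ m) :=
  ⟨∑ i ∈ S.map Fin.valEmbedding, 2 ^ i, Nat.geomSum_lt le_rfl (by simp)⟩

theorem testBit_indexOfBitSet (m : ℕ) (S : Finset (Fin m)) (k : Fin m) :
    (indexOfBitSet m S : ℕ).testBit k ↔ k ∈ S := by
  rw [indexOfBitSet, Nat.testBit_sum_two_pow]
  simp [Fin.val_inj]

theorem monomial_indexOfBitSet (m : ℕ) (T S : Finset (Fin m)) :
    monomial m T (indexOfBitSet m S) = if T ⊆ S then 1 else 0 := by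
  simp only [monomial, vVec, testBit_indexOfBitSet, prod_ite_zero]
  simp [subset_iff]

theorem linearIndependent_monomial (m : ℕ) : LinearIndependent (ZMod 2) (monomial m) :=
  linearIndependent_of_triangular_eval (monomial m) (indexOfBitSet m)
    (fun T S h => by simpa [monomial_indexOfBitSet] using h)
    (fun S => by simp [monomial_indexOfBitSet])

theorem finrank_span_monomial_image (m : ℕ) (A : Finset (Finset (Fin m))) :
    Module.finrank (ZMod 2) (Submodule.span (ZMod 2) (monomial m '' A)) = #A := by
  rw [Set.image_eq_range, ← Fintype.card_coe A]
  exact finrank_span_eq_card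
    ((linearIndependent_monomial m).comp ((↑) : A → Finset (Fin m)) Subtype.val_injective)

section

variable {α : Type*} [Fintype α] [DecidableEq α]

theorem card_filter_card_lt_eq_card_filter_lt_card {l : ℕ} (h : Fintype.card α = 2 * l) :
    #{S : Finset α | #S < l} = #{S : Finset α | l < #S} :=
  card_nbij' compl compl (fun S hS => by simp [card_compl, h] at hS ⊢; omega)
    (fun S hS => by have := S.card_le_univ; simp [card_compl, h] at hS this ⊢; omega)
    (fun S _ => compl_compl S) (fun S _ => compl_compl S)

theorem card_filter_card_lt_add_choose_add_card_filter_lt_card (l : ℕ) :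
    #{S : Finset α | #S < l} + (Fintype.card α).choose l + #{S : Finset α | l < #S} =
      2 ^ Fintype.card α := by
  have h_disj₁ : Disjoint (univ.filter (#· < l)) (powersetCard l (univ : Finset α)) :=
    disjoint_left.2 fun S => by simp only [mem_filter, mem_powersetCard_univ]; omega
  have h_disj₂ : Disjoint (univ.filter (#· < l) ∪ powersetCard l univ)
      (univ.filter fun S : Finset α => l < #S) :=
    disjoint_left.2 fun S => by simp only [mem_union, mem_filter, mem_powersetCard_univ]; omega
  have h_split : univ.filter (#· < l) ∪ powersetCard l univ ∪ univ.filter (l < #·) =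
      (univ : Finset (Finset α)) := by
    ext S
    simp only [mem_union, mem_filter, mem_univ, true_and, mem_powersetCard_univ, iff_true]
    omega
  calc _ = #(univ.filter (#· < l) ∪ powersetCard l univ ∪ univ.filter (l < #·)) := by
        rw [card_union_of_disjoint h_disj₂, card_union_of_disjoint h_disj₁, card_powersetCard,
          card_univ]
    _ = 2 ^ Fintype.card α := by rw [h_split, card_univ, Fintype.card_finset]

theorem two_mul_card_filter_card_lt_add_choose {l : ℕ} (h : Fintype.card α = 2 * l) :
    2 * #{S : Finset α | #S < l} + (2 * l).choose l = 2 ^ (2 * l) := by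
  have := card_filter_card_lt_add_choose_add_card_filter_lt_card (α := α) l
  rw [← card_filter_card_lt_eq_card_filter_lt_card h, h] at this
  omega

end

theorem HL_code_dimension_general (l m : ℕ) (hl : 0 < l) (hm : m = 2 * l)
    (Y : Finset (Finset (Fin m)))
    (hYcard : ∀ S ∈ Y, S.card = l)
    (hYmax : 2 * Y.card = Nat.choose (2 * l) l) :
    Module.finrank (ZMod 2)
      (Submodule.span (ZMod 2)
        ({x | ∃ S : Finset (Fin m), S.card < l ∧ x = monomial m S} ∪
         {x | ∃ S ∈ Y, x = monomial m S} : Set (Fin (2 ^ m) → ZMod 2))) =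
      2 ^ (m - 1) := by
  have h_gen : ({x | ∃ S : Finset (Fin m), S.card < l ∧ x = monomial m S} ∪
      {x | ∃ S ∈ Y, x = monomial m S} : Set (Fin (2 ^ m) → ZMod 2)) =
      monomial m '' ↑(({S | #S < l} : Finset (Finset (Fin m))) ∪ Y) := by
    ext x
    simp only [Set.mem_union, Set.mem_ofPred_eq, Set.mem_image, coe_union, coe_filter, mem_univ,
      true_and, mem_coe]
    grind
  have h_disj : Disjoint ({S | #S < l} : Finset (Finset (Fin m))) Y :=
    disjoint_left.2 fun S hS hSY => by simp [hYcard S hSY] at hS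
  have h_count := two_mul_card_filter_card_lt_add_choose (α := Fin m) (l := l) (by simp [hm])
  have h_pow : 2 ^ (2 * l) = 2 * 2 ^ (m - 1) := by
    rw [hm, ← pow_succ']
    congr 1
    omega
  rw [h_gen, finrank_span_monomial_image, card_union_of_disjoint h_disj]
  omega

/-- The HL-code of length `2^m` (`m = 2l`), generated by all monomials of degree `< l`
together with the monomials indexed by a maximal complement-free set `Y` of `l`-subsets,
has dimension exactly `2^(m-1)`. -/
theorem HL_code_dimension (l m : ℕ) (hl : 0 < l) (hm : m = 2 * l)
    (Y : Finset (Finset (Fin m)))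
    (hYcard : ∀ S ∈ Y, S.card = l)
    (hYfree : ∀ S ∈ Y, Sᶜ ∉ Y)
    (hYmax : 2 * Y.card = Nat.choose (2 * l) l) :
    Module.finrank (ZMod 2)
      (Submodule.span (ZMod 2)
        ({x | ∃ S : Finset (Fin m), S.card < l ∧ x = monomial m S} ∪
         {x | ∃ S ∈ Y, x = monomial m S} : Set (Fin (2 ^ m) → ZMod 2))) =
      2 ^ (m - 1) :=
  HL_code_dimension_general l m hl hm Y hYcard hYmax
end

section
/- For x = Σ_{S} a_S (∏_{i∈S} v_i) a codeword of the Reed–Muller-type span (sum over subsets S of {1,...,m}), and J ⊆ {1,...,m}, the value Δ_J x_i = ⊕_{T⊆J} x_{Φ(i,T)} equals ⊕_{S ⊇ J} a_S · (∏_{i'∈ S∖J} v_{i'})_i; in particular, if a_S = 0 for every proper superset S ⊋ J that appears in the code, then Δ_J x_i = a_J for every i. -/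
/-- `(v i)_j` = bit `i` of `j` (indices `j` taken as natural numbers). -/
def vN {m : ℕ} (i : Fin m) (j : ℕ) : ZMod 2 := if Nat.testBit j (i : ℕ) then 1 else 0

/-- Monomial evaluation vector `∏_{i ∈ S} v i`. -/
def monomialN {m : ℕ} (S : Finset (Fin m)) (j : ℕ) : ZMod 2 := ∏ i ∈ S, vN i j

/-- `Φ(i,T)`: `i` with the bits indexed by `T` simultaneously flipped. -/
def PhiF {m : ℕ} (i : ℕ) (T : Finset (Fin m)) : ℕ := i ^^^ ∑ k ∈ T, 2 ^ (k : ℕ)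

/-- `Δ_J x_i = ⊕_{T ⊆ J} x_{Φ(i,T)}`. -/
def deltaJ {m : ℕ} (J : Finset (Fin m)) (x : ℕ → ZMod 2) (i : ℕ) : ZMod 2 :=
  ∑ T ∈ J.powerset, x (PhiF i T)

lemma testBit_two_pow_add' (a s j : ℕ) (h : Nat.testBit s a = false) :
    Nat.testBit (2 ^ a + s) j = ((a == j).xor (Nat.testBit s j)) := by
  have hs : s = 2 ^ (a+1) * (s / 2 ^ (a+1)) + s % 2 ^ (a+1) :=
    (Nat.div_add_mod _ _).symm
  set q := s / 2 ^ (a+1) with hq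
  set r := s % 2 ^ (a+1) with hr
  have hrlt : r < 2 ^ (a+1) := Nat.mod_lt _ (Nat.two_pow_pos _)
  have hrbit : Nat.testBit r a = false := by
    rw [hr, Nat.testBit_mod_two_pow]
    simp [h]
  have hpow : 2 ^ (a+1) = 2 ^ a + 2 ^ a := by ring
  have hra : r < 2 ^ a := by
    rcases Nat.lt_or_ge r (2 ^ a) with h' | h'
    · exact h'
    · exfalso
      have h1 : r / 2 ^ a = 1 := by
        have hu : r / 2 ^ a < 2 := by
          rw [Nat.div_lt_iff_lt_mul (Nat.two_pow_pos a)]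
          omega
        have h2 : 1 ≤ r / 2 ^ a := (Nat.one_le_div_iff (Nat.two_pow_pos a)).2 h'
        omega
      have : Nat.testBit r a = true := by
        rw [Nat.testBit_eq_decide_div_mod_eq, h1]; decide
      rw [hrbit] at this; exact Bool.false_ne_true this
  have key : 2 ^ a + s = 2 ^ (a+1) * q + (2 ^ a + r) := by omega
  have hlt : 2 ^ a + r < 2 ^ (a+1) := by omega
  rw [key, Nat.testBit_two_pow_mul_add _ hlt, hs, Nat.testBit_two_pow_mul_add _ hrlt]
  rcases lt_trichotomy j a with hj | rfl | hj
  · have : (a == j) = false := by simp [Nat.ne_of_gt hj]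
    simp [hj, Nat.lt_succ_of_lt hj, this, Nat.testBit_two_pow_add_gt hj]
  · simp [Nat.lt_succ_self, Nat.testBit_two_pow_add_eq, hrbit]
  · have : ¬ j < a + 1 := by omega
    have ha : (a == j) = false := by simp [Nat.ne_of_lt hj]
    simp [this, ha]

lemma testBit_sum_pow {m : ℕ} (T : Finset (Fin m)) (j : ℕ) :
    Nat.testBit (∑ k ∈ T, 2 ^ (k : ℕ)) j = decide (∃ k ∈ T, (k : ℕ) = j) := by
  induction T using Finset.induction_on generalizing j with
  | empty => simp
  | @insert b T hb ih =>
    rw [Finset.sum_insert hb, testBit_two_pow_add' _ _ _ (by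
      rw [ih]
      simp only [decide_eq_false_iff_not, not_exists, not_and]
      intro k hk hkb
      exact hb (by rwa [Fin.val_injective hkb] at hk)), ih]
    by_cases hbj : (b : ℕ) = j
    · subst hbj
      have : ¬ ∃ k ∈ T, (k : ℕ) = (b : ℕ) := by
        simp only [not_exists, not_and]
        intro k hk hkb
        exact hb (by rwa [Fin.val_injective hkb] at hk)
      simp [this]
    · have : (∃ k ∈ insert b T, (k : ℕ) = j) ↔ (∃ k ∈ T, (k : ℕ) = j) := by
        simp only [Finset.mem_insert]
        constructor
        · rintro ⟨k, (rfl | hk), hkj⟩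
          · exact absurd hkj hbj
          · exact ⟨k, hk, hkj⟩
        · rintro ⟨k, hk, hkj⟩; exact ⟨k, Or.inr hk, hkj⟩
      have hb' : ((b : ℕ) == j) = false := by simp [hbj]
      simp only [this, hb', Bool.false_xor]

lemma vN_PhiF {m : ℕ} (k : Fin m) (i : ℕ) (T : Finset (Fin m)) :
    vN k (PhiF i T) = vN k i + (if k ∈ T then 1 else 0) := by
  unfold vN PhiF
  rw [Nat.testBit_xor, testBit_sum_pow]
  have : (∃ k' ∈ T, (k' : ℕ) = (k : ℕ)) ↔ k ∈ T := by
    constructor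
    · rintro ⟨k', hk', h⟩; rwa [Fin.val_injective h] at hk'
    · intro h; exact ⟨k, h, rfl⟩
  by_cases h : k ∈ T <;> by_cases h' : Nat.testBit i (k : ℕ) <;>
    simp [h, h', this] <;> decide

lemma sum_prod_chi {m : ℕ} (J : Finset (Fin m)) :
    ∀ (S : Finset (Fin m)) (i : ℕ),
      (∑ T ∈ J.powerset, ∏ k ∈ S, (vN k i + if k ∈ T then 1 else 0))
        = if J ⊆ S then monomialN (S \ J) i else 0 := by
  induction J using Finset.induction_on with
  | empty => intro S i; simp [monomialN]
  | @insert a J ha ih =>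
    intro S i
    rw [Finset.sum_powerset_insert ha]
    by_cases haS : a ∈ S
    · have h1 : ∀ T ∈ J.powerset,
          (∏ k ∈ S, (vN k i + if k ∈ T then 1 else 0))
            = vN a i * ∏ k ∈ S.erase a, (vN k i + if k ∈ T then 1 else 0) := by
        intro T hT
        rw [← Finset.mul_prod_erase S _ haS]
        have haT : a ∉ T := fun h => ha (Finset.mem_powerset.1 hT h)
        simp [haT]
      have h2 : ∀ T ∈ J.powerset,
          (∏ k ∈ S, (vN k i + if k ∈ insert a T then 1 else 0))
            = (vN a i + 1) * ∏ k ∈ S.erase a, (vN k i + if k ∈ T then 1 else 0) := by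
        intro T hT
        rw [← Finset.mul_prod_erase S _ haS]
        simp only [Finset.mem_insert, true_or, if_true]
        congr 1
        refine Finset.prod_congr rfl fun k hk => ?_
        have : k ≠ a := Finset.ne_of_mem_erase hk
        simp [this]
      rw [Finset.sum_congr rfl h1, Finset.sum_congr rfl h2, ← Finset.sum_add_distrib]
      have h3 : ∀ T ∈ J.powerset,
          (vN a i * ∏ k ∈ S.erase a, (vN k i + if k ∈ T then 1 else 0)
            + (vN a i + 1) * ∏ k ∈ S.erase a, (vN k i + if k ∈ T then 1 else 0))
          = ∏ k ∈ S.erase a, (vN k i + if k ∈ T then 1 else 0) := by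
        intro T _
        have h2 : (2 : ZMod 2) = 0 := rfl
        ring_nf
        rw [h2, mul_zero, zero_add]
      rw [Finset.sum_congr rfl h3, ih]
      have hiff : J ⊆ S.erase a ↔ insert a J ⊆ S := by
        constructor
        · intro h
          exact Finset.insert_subset haS (h.trans (Finset.erase_subset _ _))
        · intro h
          intro k hk
          refine Finset.mem_erase.2 ⟨fun hka => ha (hka ▸ hk), h (Finset.mem_insert_of_mem hk)⟩
      have hsd : S.erase a \ J = S \ insert a J := by
        ext k
        simp only [Finset.mem_sdiff, Finset.mem_erase, Finset.mem_insert]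
        tauto
      by_cases h : insert a J ⊆ S
      · rw [if_pos (hiff.2 h), if_pos h, hsd]
      · rw [if_neg (fun h' => h (hiff.1 h')), if_neg h]
    · have h2 : ∀ T ∈ J.powerset,
          (∏ k ∈ S, (vN k i + if k ∈ insert a T then 1 else 0))
            = ∏ k ∈ S, (vN k i + if k ∈ T then 1 else 0) := by
        intro T _
        refine Finset.prod_congr rfl fun k hk => ?_
        have : k ≠ a := fun h => haS (h ▸ hk)
        simp [this]
      rw [Finset.sum_congr rfl h2, if_neg (fun h => haS (h (Finset.mem_insert_self a J)))]
      have h2' : (2 : ZMod 2) = 0 := rfl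
      rw [show (∑ T ∈ J.powerset, ∏ k ∈ S, (vN k i + if k ∈ T then 1 else 0))
          + (∑ T ∈ J.powerset, ∏ k ∈ S, (vN k i + if k ∈ T then 1 else 0))
        = 2 * ∑ T ∈ J.powerset, ∏ k ∈ S, (vN k i + if k ∈ T then 1 else 0) by ring,
        h2', zero_mul]

lemma delta_monomial {m : ℕ} (J S : Finset (Fin m)) (i : ℕ) :
    (∑ T ∈ J.powerset, monomialN S (PhiF i T))
      = if J ⊆ S then monomialN (S \ J) i else 0 := by
  rw [← sum_prod_chi J S i]
  refine Finset.sum_congr rfl fun T _ => ?_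
  unfold monomialN
  exact Finset.prod_congr rfl fun k _ => vN_PhiF k i T

/-- For a codeword `x = Σ_S a_S ∏_{i∈S} v_i` and `J ⊆ {1,…,m}`, one has
`Δ_J x_i = ⊕_{S ⊇ J} a_S · (∏_{i' ∈ S∖J} v_{i'})_i`; in particular if `a_S = 0` for
every proper superset `S ⊋ J`, then `Δ_J x_i = a_J` for every `i`. -/
theorem delta_on_codeword (m : ℕ) (a : Finset (Fin m) → ZMod 2)
    (x : ℕ → ZMod 2)
    (hx : x = fun j => ∑ S ∈ (Finset.univ : Finset (Finset (Fin m))), a S * monomialN S j)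
    (J : Finset (Fin m)) :
    (∀ i < 2 ^ m,
      deltaJ J x i =
        ∑ S ∈ (Finset.univ : Finset (Finset (Fin m))).filter (fun S => J ⊆ S),
          a S * monomialN (S \ J) i) ∧
    ((∀ S : Finset (Fin m), J ⊂ S → a S = 0) →
      ∀ i < 2 ^ m, deltaJ J x i = a J) := by
  have main : ∀ i : ℕ,
      deltaJ J x i =
        ∑ S ∈ (Finset.univ : Finset (Finset (Fin m))).filter (fun S => J ⊆ S),
          a S * monomialN (S \ J) i := by
    intro i
    unfold deltaJ
    rw [hx]
    simp only
    rw [Finset.sum_comm]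
    rw [Finset.sum_filter]
    refine Finset.sum_congr rfl fun S _ => ?_
    rw [← Finset.mul_sum, delta_monomial]
    by_cases h : J ⊆ S
    · rw [if_pos h, if_pos h]
    · rw [if_neg h, if_neg h, mul_zero]
  refine ⟨fun i _ => main i, fun hvanish i _ => ?_⟩
  rw [main i]
  rw [Finset.sum_eq_single J]
  · simp [monomialN]
  · intro S hS hne
    rw [hvanish S (Finset.ssubset_iff_subset_ne.2 ⟨(Finset.mem_filter.1 hS).2, (Ne.symm hne)⟩),
      zero_mul]
  · intro h
    exact absurd (Finset.mem_filter.2 ⟨Finset.mem_univ J, Finset.Subset.refl J⟩) h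
end
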